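/- arXiv:1003.2370 — 2 statements merged into one kernel-verified Lean document; each statement's English description precedes it below -/
import Mathlib

section
/- Let G be a group and H ≤ G a subgroup. Then there exists a unique smallest almost malnormal subgroup of G containing H, namely the intersection of all almost malnormal subgroups of G containing H (this intersection is nonempty since G itself is almost malnormal in G). -/
def AlmostMalnormal {G : Type*} [Group G] (K : Subgroup G) : Prop :=
  ∀ g : G, g ∉ K → Set.Finite {x : G | x ∈ K ∧ g⁻¹ * x * g ∈ K}

theorem almostMalnormal_closure {G : Type*} [Group G] (H : Subgroup G) :
    AlmostMalnormal (sInf {K : Subgroup G | AlmostMalnormal K ∧ H ≤ K}) ∧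
    H ≤ sInf {K : Subgroup G | AlmostMalnormal K ∧ H ≤ K} ∧
    (∀ K ∈ {K : Subgroup G | AlmostMalnormal K ∧ H ≤ K},
      sInf {K : Subgroup G | AlmostMalnormal K ∧ H ≤ K} ≤ K) ∧
    (∃! L : Subgroup G, AlmostMalnormal L ∧ H ≤ L ∧
      ∀ K, AlmostMalnormal K → H ≤ K → L ≤ K) := by
  set S := {K : Subgroup G | AlmostMalnormal K ∧ H ≤ K} with hS
  have hmal : AlmostMalnormal (sInf S) := by
    intro g hg
    have : ∃ K ∈ S, g ∉ K := by
      by_contra h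
      push_neg at h
      exact hg ((Subgroup.mem_sInf).2 fun K hK => h K hK)
    obtain ⟨K, hK, hgK⟩ := this
    refine Set.Finite.subset (hK.1 g hgK) ?_
    intro x hx
    exact ⟨(Subgroup.mem_sInf.1 hx.1) K hK, (Subgroup.mem_sInf.1 hx.2) K hK⟩
  have hle : H ≤ sInf S := le_sInf fun K hK => hK.2
  have hmin : ∀ K ∈ S, sInf S ≤ K := fun K hK => sInf_le hK
  refine ⟨hmal, hle, hmin, ⟨sInf S, ⟨hmal, hle, fun K hK1 hK2 => hmin K ⟨hK1, hK2⟩⟩, ?_⟩⟩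
  rintro L ⟨hL1, hL2, hL3⟩
  exact le_antisymm (hL3 _ hmal hle) (hmin L ⟨hL1, hL2⟩)
end

section
/- Let G be a group. The quotient F₂-vector space P(G)/F(G) (power set modulo finite sets, under symmetric difference) has trivial G-invariant subspace, i.e., (P(G)/F(G))^G = 0, if and only if G is finite. -/
/-- `(P(G)/F(G))^G = 0` iff `G` is finite: every subset `A` with `A Δ Ag` finite
for all `g` is itself finite, if and only if `G` is finite. -/
theorem ends_zero_iff_finite (G : Type*) [Group G] :
    (∀ A : Set G, (∀ g : G, (symmDiff A ((· * g) '' A)).Finite) → A.Finite) ↔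
      Finite G := by
  constructor
  · intro h
    have huniv : (Set.univ : Set G).Finite := by
      apply h
      intro g
      have himg : ((· * g) '' (Set.univ : Set G)) = Set.univ :=
        Set.image_univ_of_surjective (fun x => ⟨x * g⁻¹, by simp⟩)
      simp [himg]
    exact Set.finite_univ_iff.mp huniv
  · intro h A _
    exact A.toFinite
end
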